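/- arXiv:1506.08961 — 6 statements merged into one kernel-verified Lean document; each statement's English description precedes it below -/
import Mathlib

section
/- Let H be a normalized generalized Hadamard matrix H(q,λ) over 𝔽_q. Then rank(C_H) = rank(F_H) + 1 and ker(C_H) = ker(F_H) + 1. -/
/-!
Let `j` be the zero column of `H`. Every word of `F_H` vanishes at `j` while `𝟏` does not, so
`𝟏 ∉ ⟨F_H⟩`, and `⟨C_H⟩ = ⟨F_H⟩ + F·𝟏`. For the kernels, `𝟏 ∈ K(C_H)` and `K(F_H) ⊆ K(C_H)`;
conversely, for `x ∈ K(C_H)` the vector `x - x_j 𝟏` lies in `K(F_H)`, because a word of `C_H`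
vanishing at `j` is a row of `H`. Since the words of `K(F_H)` also vanish at `j`, both
dimensions go up by exactly one.
-/

open Finset

/-- `H` is a generalized Hadamard matrix with parameter `lam`: for every pair of
distinct rows, the multiset of coordinatewise differences contains every element
of `F` exactly `lam` times. -/
def IsGH {F : Type*} [Fintype F] [DecidableEq F] [Sub F]
    {ι : Type*} [Fintype ι] (lam : ℕ) (H : Matrix ι ι F) : Prop :=
  ∀ i j : ι, i ≠ j → ∀ a : F,
    (Finset.univ.filter (fun s => H i s - H j s = a)).card = lam

/-- A matrix is normalized if its first row and first column are all zeros. -/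
def Normalized {F : Type*} [Zero F] {n : ℕ} (H : Matrix (Fin n) (Fin n) F) : Prop :=
  ∀ i s : Fin n, (i.val = 0 ∨ s.val = 0) → H i s = 0

/-- The code `F_H` whose codewords are the rows of `H`. -/
def rowSet {F ι : Type*} (H : Matrix ι ι F) : Set (ι → F) :=
  Set.range (fun i => H i)

/-- The GH code `C_H = ⋃_{α ∈ F} (F_H + α·𝟏)`. -/
def ghCode {F ι : Type*} [Add F] (H : Matrix ι ι F) : Set (ι → F) :=
  {v | ∃ (α : F) (i : ι), v = fun s => H i s + α}

/-- The rank of a code: the dimension of its linear span. -/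
noncomputable def rankC {F ι : Type*} [Field F] (C : Set (ι → F)) : ℕ :=
  Module.finrank F (Submodule.span F C)

/-- The kernel `K(C) = {x : αx + C = C for all α}` of a code. -/
def kerSet {F ι : Type*} [Mul F] [Add F] (C : Set (ι → F)) : Set (ι → F) :=
  {x | ∀ α : F, (fun c => (fun i => α * x i) + c) '' C = C}

/-- The dimension of the kernel of a code. -/
noncomputable def kerDim {F ι : Type*} [Field F] (C : Set (ι → F)) : ℕ :=
  Module.finrank F (Submodule.span F (kerSet C))

/-- The `p`-kernel `K_p(C) = {x : x + C = C}` of a code. -/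
def pKerSet {F ι : Type*} [Add F] (C : Set (ι → F)) : Set (ι → F) :=
  {x | (fun c => x + c) '' C = C}

/-- The Euclidean orthogonal code `C^⊥`. -/
def dualSet {F ι : Type*} [CommRing F] [Fintype ι] (C : Set (ι → F)) : Set (ι → F) :=
  {v | ∀ w ∈ C, ∑ i, v i * w i = 0}

/-- Two matrices are translation equivalent if the rows of one are obtained from the
rows of the other by adding a fixed vector. -/
def TransEquiv {F ι : Type*} [Add F] (B B' : Matrix ι ι F) : Prop :=
  ∃ v : ι → F, rowSet B' = (fun b => v + b) '' rowSet B

/-- The Kronecker sum `H₁ ⊕ H₂`. -/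
def kroneckerSum {F ι κ : Type*} [Add F] (H₁ : Matrix ι ι F) (H₂ : Matrix κ κ F) :
    Matrix (ι × κ) (ι × κ) F :=
  fun p r => H₁ p.1 r.1 + H₂ p.2 r.2

/-- The Kronecker sum `H₁ ⊕ [B₁, …, Bₙ]`, whose `(i,j)` block is `h_{ij} + B_i`. -/
def kroneckerSumFam {F ι κ : Type*} [Add F] (H₁ : Matrix ι ι F) (B : ι → Matrix κ κ F) :
    Matrix (ι × κ) (ι × κ) F :=
  fun p r => H₁ p.1 r.1 + B p.1 p.2 r.2

/-- The multiplicative-table matrix `S_q` of a field. -/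
def mulTable (F : Type*) [Mul F] : Matrix F F F := fun i j => i * j

/-- A code is `K`-additive, for a subfield `K`, if it is a linear space over `K`. -/
def IsAdditiveOver {F ι : Type*} [Field F] (K : Subfield F) (C : Set (ι → F)) : Prop :=
  (0 : ι → F) ∈ C ∧ (∀ x ∈ C, ∀ y ∈ C, x + y ∈ C) ∧
    ∀ (a : K), ∀ x ∈ C, (fun i => (a : F) * x i) ∈ C

section

open Submodule Module

variable {F ι : Type*} [Field F]

theorem mem_kerSet_iff {C : Set (ι → F)} {x : ι → F} :
    x ∈ kerSet C ↔ ∀ α : F, ∀ c ∈ C, α • x + c ∈ C := by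
  refine ⟨fun hx α c hc => hx α ▸ ⟨c, hc, rfl⟩, fun h α => ?_⟩
  refine (Set.image_subset_iff.2 fun c hc => h α c hc).antisymm fun c hc =>
    ⟨-α • x + c, h _ _ hc, ?_⟩
  change α • x + (-α • x + c) = c
  rw [neg_smul, add_neg_cancel_left]

theorem one_notMem_span_of_apply_eq_zero {S : Set (ι → F)} (j : ι) (hS : ∀ v ∈ S, v j = 0) :
    (1 : ι → F) ∉ span F S := fun h => by
  have hle : span F S ≤ LinearMap.ker (LinearMap.proj j : (ι → F) →ₗ[F] F) := span_le.2 hS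
  simpa using hle h

theorem finrank_span_eq_add_one_of_eq_sup_span_one [Finite ι] {S T : Set (ι → F)} (j : ι)
    (hS : ∀ v ∈ S, v j = 0) (hT : span F T = span F S ⊔ span F {1}) :
    finrank F (span F T) = finrank F (span F S) + 1 := by
  rw [hT, finrank_sup_span_singleton (one_notMem_span_of_apply_eq_zero j hS)]

section GHCode

variable (H : Matrix ι ι F)

theorem rowSet_subset_ghCode : rowSet H ⊆ ghCode H := by
  rintro _ ⟨i, rfl⟩
  exact ⟨0, i, by simp⟩

theorem add_smul_one_mem_ghCode {v : ι → F} (hv : v ∈ ghCode H) (β : F) :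
    v + β • 1 ∈ ghCode H := by
  obtain ⟨α, i, rfl⟩ := hv
  exact ⟨α + β, i, by ext; simp [add_assoc]⟩

theorem span_ghCode [Nonempty ι] :
    span F (ghCode H) = span F (rowSet H) ⊔ span F {1} := by
  refine le_antisymm (span_le.2 ?_) (sup_le (span_mono (rowSet_subset_ghCode H)) ?_)
  · rintro _ ⟨α, i, rfl⟩
    have hv : (fun s => H i s + α) = H i + α • (1 : ι → F) := by ext; simp
    rw [hv]
    exact add_mem (mem_sup_left (subset_span ⟨i, rfl⟩))
      (mem_sup_right (smul_mem _ _ (mem_span_singleton_self _)))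
  · obtain ⟨i⟩ := ‹Nonempty ι›
    have hi := rowSet_subset_ghCode H ⟨i, rfl⟩
    have h1 : (1 : ι → F) = (H i + (1 : F) • 1) - H i := by simp
    rw [span_singleton_le_iff_mem, h1]
    exact sub_mem (subset_span (add_smul_one_mem_ghCode H hi 1)) (subset_span hi)

variable {H} {j : ι} (hcol : ∀ i, H i j = 0)
include hcol

theorem apply_eq_zero_of_mem_rowSet {v : ι → F} (hv : v ∈ rowSet H) : v j = 0 := by
  obtain ⟨i, rfl⟩ := hv
  exact hcol i

theorem mem_rowSet_of_mem_ghCode {v : ι → F} (hv : v ∈ ghCode H) (hvj : v j = 0) :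
    v ∈ rowSet H := by
  obtain ⟨α, i, rfl⟩ := hv
  obtain rfl : α = 0 := by simpa [hcol i] using hvj
  exact ⟨i, by simp⟩

theorem apply_eq_zero_of_mem_kerSet_rowSet {x : ι → F} (hx : x ∈ kerSet (rowSet H)) :
    x j = 0 := by
  simpa [hcol j] using
    apply_eq_zero_of_mem_rowSet hcol (mem_kerSet_iff.1 hx 1 _ ⟨j, rfl⟩)

theorem sub_smul_one_mem_kerSet_rowSet {x : ι → F} (hx : x ∈ kerSet (ghCode H)) :
    x - x j • 1 ∈ kerSet (rowSet H) := by
  refine mem_kerSet_iff.2 fun α c hc => mem_rowSet_of_mem_ghCode hcol ?_ ?_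
  · have hmem := add_smul_one_mem_ghCode H
      (mem_kerSet_iff.1 hx α c (rowSet_subset_ghCode H hc)) (-(α * x j))
    convert hmem using 1
    ext s
    simp only [Pi.add_apply, Pi.smul_apply, Pi.sub_apply, Pi.one_apply, smul_eq_mul]
    ring
  · simp [apply_eq_zero_of_mem_rowSet hcol hc]

omit hcol in
theorem kerSet_rowSet_subset_kerSet_ghCode : kerSet (rowSet H) ⊆ kerSet (ghCode H) := by
  refine fun x hx => mem_kerSet_iff.2 fun α c hc => ?_
  obtain ⟨β, i, rfl⟩ := hc
  obtain ⟨k, hk⟩ := mem_kerSet_iff.1 hx α _ ⟨i, rfl⟩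
  refine ⟨β, k, funext fun s => ?_⟩
  simp only [congrFun hk s, Pi.add_apply, Pi.smul_apply, smul_eq_mul, add_assoc]

omit hcol in
theorem one_mem_kerSet_ghCode : (1 : ι → F) ∈ kerSet (ghCode H) :=
  mem_kerSet_iff.2 fun α c hc => by simpa [add_comm] using add_smul_one_mem_ghCode H hc α

theorem span_kerSet_ghCode :
    span F (kerSet (ghCode H)) = span F (kerSet (rowSet H)) ⊔ span F {1} := by
  refine le_antisymm (span_le.2 fun x hx => ?_)
    (sup_le (span_mono kerSet_rowSet_subset_kerSet_ghCode)
      ((span_singleton_le_iff_mem _ _).2 (subset_span one_mem_kerSet_ghCode)))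
  rw [← sub_add_cancel x (x j • 1)]
  exact add_mem (mem_sup_left (subset_span (sub_smul_one_mem_kerSet_rowSet hcol hx)))
    (mem_sup_right (smul_mem _ _ (mem_span_singleton_self _)))

variable [Finite ι]

theorem rankC_ghCode : rankC (ghCode H) = rankC (rowSet H) + 1 :=
  have : Nonempty ι := ⟨j⟩
  finrank_span_eq_add_one_of_eq_sup_span_one j (fun _ => apply_eq_zero_of_mem_rowSet hcol)
    (span_ghCode H)

theorem kerDim_ghCode : kerDim (ghCode H) = kerDim (rowSet H) + 1 :=
  finrank_span_eq_add_one_of_eq_sup_span_one j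
    (fun _ => apply_eq_zero_of_mem_kerSet_rowSet hcol) (span_kerSet_ghCode hcol)

end GHCode

end

theorem stmt0_general {q lam : ℕ} {F : Type*} [Field F] [Fintype F]
    (hcard : Fintype.card F = q) (hlam : 0 < lam)
    (H : Matrix (Fin (q * lam)) (Fin (q * lam)) F)
    (hnorm : Normalized H) :
    rankC (ghCode H) = rankC (rowSet H) + 1 ∧
    kerDim (ghCode H) = kerDim (rowSet H) + 1 := by
  let j : Fin (q * lam) := ⟨0, Nat.mul_pos (hcard ▸ Fintype.card_pos) hlam⟩
  have hcol : ∀ i, H i j = 0 := fun i => hnorm i j (Or.inr rfl)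
  exact ⟨rankC_ghCode hcol, kerDim_ghCode hcol⟩

theorem stmt0 {q lam : ℕ} {F : Type*} [Field F] [Fintype F] [DecidableEq F]
    (hcard : Fintype.card F = q) (hlam : 0 < lam)
    (H : Matrix (Fin (q * lam)) (Fin (q * lam)) F)
    (hGH : IsGH lam H) (hnorm : Normalized H) :
    rankC (ghCode H) = rankC (rowSet H) + 1 ∧
    kerDim (ghCode H) = kerDim (rowSet H) + 1 :=
  stmt0_general hcard hlam H hnorm
end

section
/- Let H be a normalized generalized Hadamard matrix over a finite commutative ring R that is not a field. Then the kernel K(F_H) = {x ∈ R^n : αx + F_H = F_H for all α ∈ R} is trivial, i.e., K(F_H) = {0}. -/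
open Finset

/-!
If `x` lies in the kernel of `F_H`, then every multiple `αx = αx + 0` is a row of `H`, since the
first row is zero. A nonzero row of a normalized GH matrix takes every value exactly `λ` times.
Pick zero divisors `ba = 0` with `a, b ≠ 0`. If `x ≠ 0`, the row `bx` vanishes exactly where `x`
takes a value in the annihilator of `b`, which holds at least `0` and `a`; so `bx` has at least
`2λ` zeros and cannot take every value `λ` times, while `bx ≠ 0` because `x` takes the value `1`.
-/

theorem exists_mul_eq_zero_of_not_isField {R : Type*} [CommRing R] [Finite R] [Nontrivial R]
    (h : ¬ IsField R) : ∃ a b : R, a ≠ 0 ∧ b ≠ 0 ∧ b * a = 0 := by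
  by_contra! hR
  have : NoZeroDivisors R :=
    ⟨fun {b a} hba => or_iff_not_imp_left.2 fun hb => by_contra fun ha => hR a b ha hb hba⟩
  have := NoZeroDivisors.to_isDomain R
  exact h (Finite.isDomain_to_isField R)

section Kernel

variable {F ι : Type*} {C : Set (ι → F)} {x : ι → F}

theorem zero_mem_kerSet [NonUnitalNonAssocSemiring F] : (0 : ι → F) ∈ kerSet C := by
  intro α
  convert Set.image_id C
  ext c
  simp

theorem mul_mem_of_mem_kerSet [Mul F] [AddZeroClass F] (hx : x ∈ kerSet C) (h0 : 0 ∈ C)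
    (α : F) : (fun i => α * x i) ∈ C := by
  rw [← hx α]
  exact ⟨0, h0, by simp⟩

end Kernel

def IsBalanced {F ι : Type*} [Fintype ι] [DecidableEq F] (lam : ℕ) (v : ι → F) : Prop :=
  ∀ c : F, #{s | v s = c} = lam

namespace IsBalanced

variable {R ι : Type*} [Fintype ι] [DecidableEq R] {lam : ℕ} {v : ι → R}

theorem exists_eq (hv : IsBalanced lam v) (hlam : 0 < lam) (c : R) : ∃ s, v s = c := by
  obtain ⟨s, hs⟩ := Finset.card_pos.1 ((hv c).symm ▸ hlam)
  exact ⟨s, (Finset.mem_filter.1 hs).2⟩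

theorem card_filter_mul_eq_zero [Fintype R] [MulZeroClass R] (hv : IsBalanced lam v) (b : R) :
    #{s | b * v s = 0} = #{c | b * c = 0} * lam := by
  rw [card_eq_sum_card_fiberwise (f := v) (t := {c | b * c = 0}) (fun s hs => by simpa using hs),
    ← smul_eq_mul, ← Finset.sum_const]
  refine Finset.sum_congr rfl fun c hc => ?_
  rw [Finset.filter_filter, ← hv c]
  exact congrArg Finset.card <| Finset.filter_congr fun s _ =>
    ⟨And.right, fun hs => ⟨hs ▸ (Finset.mem_filter.1 hc).2, hs⟩⟩

theorem mul_ne_zero [MulZeroOneClass R] (hv : IsBalanced lam v) (hlam : 0 < lam) {b : R}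
    (hb : b ≠ 0) : (fun s => b * v s) ≠ 0 := by
  obtain ⟨s, hs⟩ := hv.exists_eq hlam 1
  intro h
  exact hb (by simpa [hs] using congrFun h s)

theorem not_isBalanced_mul [Fintype R] [MulZeroClass R] (hv : IsBalanced lam v) (hlam : 0 < lam)
    {a b : R} (ha : a ≠ 0) (hab : b * a = 0) : ¬ IsBalanced lam (fun s => b * v s) := by
  intro hbv
  have hann : #{c | b * c = 0} = 1 :=
    Nat.eq_of_mul_eq_mul_right hlam <|
      (hv.card_filter_mul_eq_zero b).symm.trans <| (hbv 0).trans (one_mul lam).symm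
  exact ha (Finset.card_le_one.1 hann.le a (by simpa using hab) 0 (by simp))

end IsBalanced

theorem IsGH.eq_zero_or_isBalanced_of_mem_rowSet {R : Type*} [AddGroup R] [Fintype R]
    [DecidableEq R] {lam n : ℕ} {H : Matrix (Fin n) (Fin n) R} (hGH : IsGH lam H)
    (hnorm : Normalized H) {v : Fin n → R} (hv : v ∈ rowSet H) : v = 0 ∨ IsBalanced lam v := by
  obtain ⟨i, rfl⟩ := hv
  have hz : ∀ s, H ⟨0, i.pos⟩ s = 0 := fun s => hnorm _ s (Or.inl rfl)
  by_cases hi : i = ⟨0, i.pos⟩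
  · exact .inl (hi ▸ funext hz)
  · exact .inr fun c => by simpa [hz] using hGH i _ hi c

theorem stmt1 {lam : ℕ} {R : Type*} [CommRing R] [Fintype R] [DecidableEq R]
    (hnf : ¬ IsField R) (hlam : 0 < lam)
    (H : Matrix (Fin (Fintype.card R * lam)) (Fin (Fintype.card R * lam)) R)
    (hGH : IsGH lam H) (hnorm : Normalized H) :
    kerSet (rowSet H) = {0} := by
  refine Set.eq_singleton_iff_unique_mem.2 ⟨zero_mem_kerSet, fun x hx => ?_⟩
  have h0 : (0 : Fin (Fintype.card R * lam) → R) ∈ rowSet H :=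
    ⟨⟨0, Nat.mul_pos Fintype.card_pos hlam⟩, funext fun s => hnorm _ s (Or.inl rfl)⟩
  have hrow (α : R) :=
    hGH.eq_zero_or_isBalanced_of_mem_rowSet hnorm (mul_mem_of_mem_kerSet hx h0 α)
  by_contra hx0
  obtain ⟨s, hs⟩ := Function.ne_iff.1 hx0
  have : Nontrivial R := nontrivial_of_ne _ _ hs
  obtain ⟨a, b, ha, hb, hab⟩ := exists_mul_eq_zero_of_not_isField hnf
  have hxb : IsBalanced lam x := by simpa [hx0] using hrow 1
  rcases hrow b with hbx | hbx
  · exact hxb.mul_ne_zero hlam hb hbx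
  · exact hxb.not_isBalanced_mul hlam ha hab hbx
end

section
/- Let H₁ and H₂ be two generalized Hadamard matrices over 𝔽_q with H = H₁ ⊕ H₂, and let K be a subfield of 𝔽_q. If C_{H₁} and C_{H₂} are K-additive, then C_H is also K-additive and dim_K(C_H) = dim_K(C_{H₁}) + dim_K(C_{H₂}) − 1, equivalently |C_H| = |C_{H₁}|·|C_{H₂}|/q. -/
open Finset

/-! Every word of `C_{H₁ ⊕ H₂}` has the shape `(r₁, r₂) ↦ x r₁ + y r₂` with `x ∈ C_{H₁}` and
`y ∈ C_{H₂}`, so closure under addition and `K`-scaling passes from the factors to the Kronecker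
sum. For the count: in a GH matrix with `λ > 0` no two distinct rows differ by a constant, so
`(α, i) ↦ H i + α·𝟏` parametrizes `C_H` bijectively and `|C_H| = q n`. This injectivity passes
to `H₁ ⊕ H₂`, whence `|C_{H₁ ⊕ H₂}| = q n₁ n₂ = |C_{H₁}| |C_{H₂}| / q`. -/

section GHCode

variable {F ι κ : Type*}

theorem mem_ghCode_kroneckerSum [AddCommMonoid F] {H₁ : Matrix ι ι F} {H₂ : Matrix κ κ F}
    {v : ι × κ → F} :
    v ∈ ghCode (kroneckerSum H₁ H₂) ↔
      ∃ x ∈ ghCode H₁, ∃ y ∈ ghCode H₂, v = fun r => x r.1 + y r.2 := by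
  constructor
  · rintro ⟨α, ⟨i, j⟩, rfl⟩
    refine ⟨_, ⟨α, i, rfl⟩, _, ⟨0, j, rfl⟩, ?_⟩
    funext r
    simp only [kroneckerSum, add_zero]
    abel
  · rintro ⟨_, ⟨α, i, rfl⟩, _, ⟨β, j, rfl⟩, rfl⟩
    refine ⟨α + β, (i, j), ?_⟩
    funext r
    simp only [kroneckerSum]
    abel

theorem IsAdditiveOver.kroneckerSum [Field F] {K : Subfield F}
    {H₁ : Matrix ι ι F} {H₂ : Matrix κ κ F}
    (hK₁ : IsAdditiveOver K (ghCode H₁)) (hK₂ : IsAdditiveOver K (ghCode H₂)) :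
    IsAdditiveOver K (ghCode (kroneckerSum H₁ H₂)) := by
  obtain ⟨zero₁, add₁, smul₁⟩ := hK₁
  obtain ⟨zero₂, add₂, smul₂⟩ := hK₂
  refine ⟨?_, ?_, ?_⟩
  · exact mem_ghCode_kroneckerSum.2 ⟨0, zero₁, 0, zero₂, by funext r; simp⟩
  · rintro _ hv _ hw
    obtain ⟨x, hx, y, hy, rfl⟩ := mem_ghCode_kroneckerSum.1 hv
    obtain ⟨x', hx', y', hy', rfl⟩ := mem_ghCode_kroneckerSum.1 hw
    refine mem_ghCode_kroneckerSum.2 ⟨_, add₁ x hx x' hx', _, add₂ y hy y' hy', ?_⟩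
    funext r
    simp only [Pi.add_apply]
    abel
  · rintro a _ hv
    obtain ⟨x, hx, y, hy, rfl⟩ := mem_ghCode_kroneckerSum.1 hv
    exact mem_ghCode_kroneckerSum.2 ⟨_, smul₁ a x hx, _, smul₂ a y hy, by funext r; ring⟩

def ghWord [Add F] (H : Matrix ι ι F) (p : F × ι) : ι → F :=
  fun s => H p.2 s + p.1

theorem ghCode_eq_range_ghWord [Add F] (H : Matrix ι ι F) :
    ghCode H = Set.range (ghWord H) := by
  ext v
  constructor
  · rintro ⟨α, i, rfl⟩
    exact ⟨(α, i), rfl⟩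
  · rintro ⟨⟨α, i⟩, rfl⟩
    exact ⟨α, i, rfl⟩

theorem natCard_ghCode [Add F] {H : Matrix ι ι F} (h : Function.Injective (ghWord H)) :
    Nat.card (ghCode H) = Nat.card F * Nat.card ι := by
  rw [ghCode_eq_range_ghWord, Nat.card_range_of_injective h, Nat.card_prod]

theorem IsGH.injective_ghWord [AddCommGroup F] [Nontrivial F] [Fintype F] [DecidableEq F]
    [Fintype ι] {lam : ℕ} (hlam : 0 < lam) {H : Matrix ι ι F} (h : IsGH lam H) :
    Function.Injective (ghWord H) := by
  rintro ⟨α, i⟩ ⟨β, j⟩ heq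
  have hword (s : ι) : H i s - H j s = β - α := by
    have := congrFun heq s
    simp only [ghWord] at this
    rw [sub_eq_sub_iff_add_eq_add, this, add_comm]
  obtain rfl : i = j := by
    by_contra hij
    obtain ⟨a, ha⟩ := exists_ne (β - α)
    obtain ⟨s, hs⟩ := Finset.card_pos.1 ((h i j hij a).symm ▸ hlam)
    exact ha ((Finset.mem_filter.1 hs).2.symm.trans (hword s))
  simpa [sub_eq_zero, eq_comm] using hword i

theorem injective_ghWord_kroneckerSum [AddCommGroup F] {H₁ : Matrix ι ι F} {H₂ : Matrix κ κ F}
    (h₁ : Function.Injective (ghWord H₁)) (h₂ : Function.Injective (ghWord H₂)) :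
    Function.Injective (ghWord (kroneckerSum H₁ H₂)) := by
  rintro ⟨α, i, j⟩ ⟨β, i', j'⟩ heq
  have hword (r : ι × κ) : H₁ i r.1 + H₂ j r.2 + α = H₁ i' r.1 + H₂ j' r.2 + β :=
    congrFun heq r
  -- Freezing the second coordinate gives an equation between words of `C_{H₁}`; any column
  -- index will do, and the row index `j` is one at hand.
  have h₁eq := h₁ (a₁ := (H₂ j j + α, i)) (a₂ := (H₂ j' j + β, i')) <| funext fun s => by
    simpa only [ghWord, add_assoc] using hword (s, j)
  obtain ⟨hc, rfl⟩ := Prod.ext_iff.1 h₁eq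
  have h₂eq := h₂ (a₁ := (α, j)) (a₂ := (β, j')) <| funext fun s => by
    simpa only [ghWord, add_assoc, add_right_inj] using hword (i, s)
  obtain ⟨rfl, rfl⟩ := Prod.ext_iff.1 h₂eq
  rfl

end GHCode

theorem stmt3 {q lam mu : ℕ} {F : Type*} [Field F] [Fintype F] [DecidableEq F]
    (hcard : Fintype.card F = q) (hlam : 0 < lam) (hmu : 0 < mu)
    (K : Subfield F)
    (H₁ : Matrix (Fin (q * lam)) (Fin (q * lam)) F)
    (H₂ : Matrix (Fin (q * mu)) (Fin (q * mu)) F)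
    (h₁ : IsGH lam H₁) (h₂ : IsGH mu H₂)
    (hK₁ : IsAdditiveOver K (ghCode H₁)) (hK₂ : IsAdditiveOver K (ghCode H₂)) :
    IsAdditiveOver K (ghCode (kroneckerSum H₁ H₂)) ∧
    Nat.card (ghCode (kroneckerSum H₁ H₂)) * q =
      Nat.card (ghCode H₁) * Nat.card (ghCode H₂) := by
  refine ⟨hK₁.kroneckerSum hK₂, ?_⟩
  have inj₁ := h₁.injective_ghWord hlam
  have inj₂ := h₂.injective_ghWord hmu
  rw [natCard_ghCode (injective_ghWord_kroneckerSum inj₁ inj₂), natCard_ghCode inj₁,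
    natCard_ghCode inj₂, Nat.card_prod, Nat.card_eq_fintype_card (α := F), hcard]
  simp only [Nat.card_eq_fintype_card, Fintype.card_fin]
  ring
end

section
/- For q > 3, there exist two generalized Hadamard matrices H(q,1) over 𝔽_q, namely S_q and the matrix S′_q obtained from S_q by transposing its second and third columns, which are not translation equivalent; moreover, the sets of rows F_{S_q} and F_{S′_q} intersect only in the zero vector. -/
open Finset

/-
The rows of `S_q` are the linear maps `j ↦ i * j`, which form an additive group; the rows of
`S′_q` are `j ↦ i * σ j` with `σ = (1 ω)`. Comparing a common row at a point `z ∉ {0, 1, ω}`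
fixed by `σ` and then at `1` shows that only the zero row is shared. A translate `v + F_{S_q}`
containing the zero row of `S′_q` is `F_{S_q}` itself, so translation equivalence would put
every row of `S′_q` into `F_{S_q}`.
-/

lemma Fintype.exists_ne_ne_ne_of_three_lt_card {α : Type*} [Fintype α] [DecidableEq α]
    (h : 3 < Fintype.card α) (a b c : α) : ∃ x, x ≠ a ∧ x ≠ b ∧ x ≠ c := by
  obtain ⟨x, -, hx⟩ := exists_mem_notMem_of_card_lt_card (s := {a, b, c}) (t := univ)
    (card_le_three.trans_lt (by rwa [card_univ]))
  exact ⟨x, by simpa using hx⟩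

section MulTable

variable {F : Type*} [Field F]

lemma isGH_one_mul_perm [Fintype F] [DecidableEq F] (σ : Equiv.Perm F) :
    IsGH 1 (fun i j => i * σ j : Matrix F F F) := by
  intro i i' hii' a
  have hd : i - i' ≠ 0 := sub_ne_zero.mpr hii'
  rw [card_eq_one]
  refine ⟨σ.symm ((i - i')⁻¹ * a), ?_⟩
  ext s
  simp only [mem_filter, mem_univ, true_and, mem_singleton, ← sub_mul, Equiv.eq_symm_apply]
  constructor
  · rintro rfl
    rw [← mul_assoc, inv_mul_cancel₀ hd, one_mul]
  · intro h
    rw [h, ← mul_assoc, mul_inv_cancel₀ hd, one_mul]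

lemma isGH_one_mulTable [Fintype F] [DecidableEq F] : IsGH 1 (mulTable F) :=
  isGH_one_mul_perm (Equiv.refl F)

lemma mulTable_sub (i i' : F) : mulTable F i - mulTable F i' = mulTable F (i - i') :=
  funext fun j => (sub_mul i i' j).symm

lemma rowSet_mulTable_inter_rowSet_mul_perm {σ : Equiv.Perm F} {z y : F}
    (hz0 : z ≠ 0) (hz : σ z = z) (hy : σ y ≠ y) :
    rowSet (mulTable F) ∩ rowSet (fun i j => i * σ j : Matrix F F F) = {0} := by
  ext v
  simp only [Set.mem_inter_iff, Set.mem_singleton_iff, rowSet, Set.mem_range]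
  constructor
  · rintro ⟨⟨i, rfl⟩, ⟨i', hi'⟩⟩
    obtain rfl : i' = i := by
      have hzrow := congrFun hi' z
      rw [hz] at hzrow
      exact mul_right_cancel₀ hz0 hzrow
    have hyrow : i' * (σ y - y) = 0 := by
      rw [mul_sub, sub_eq_zero]
      exact congrFun hi' y
    obtain rfl : i' = 0 := (mul_eq_zero.mp hyrow).resolve_right (sub_ne_zero.mpr hy)
    funext j
    simp [mulTable]
  · rintro rfl
    exact ⟨⟨0, funext fun j => zero_mul j⟩, ⟨0, funext fun j => zero_mul (σ j)⟩⟩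

lemma not_transEquiv_mulTable_mul_perm {σ : Equiv.Perm F}
    (hinter : rowSet (mulTable F) ∩ rowSet (fun i j => i * σ j : Matrix F F F) = {0}) :
    ¬ TransEquiv (mulTable F) (fun i j => i * σ j : Matrix F F F) := by
  rintro ⟨v, hv⟩
  obtain ⟨-, ⟨i, rfl⟩, hi⟩ : (0 : F → F) ∈ (fun b => v + b) '' rowSet (mulTable F) :=
    hv ▸ ⟨0, funext fun j => zero_mul (σ j)⟩
  obtain ⟨-, ⟨c, rfl⟩, hc⟩ : (σ : F → F) ∈ (fun b => v + b) '' rowSet (mulTable F) :=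
    hv ▸ ⟨1, funext fun j => one_mul (σ j)⟩
  beta_reduce at hi hc
  have hσrow : (σ : F → F) = mulTable F (c - i) := by
    rw [← mulTable_sub, ← add_sub_add_left_eq_sub _ _ v, hc, hi, sub_zero]
  have hσ0 : (σ : F → F) = 0 := by
    rw [← Set.mem_singleton_iff, ← hinter]
    exact ⟨⟨c - i, hσrow.symm⟩, ⟨1, funext fun j => one_mul (σ j)⟩⟩
  simpa using congrFun hσ0 (σ.symm 1)

end MulTable

theorem stmt7 {q : ℕ} {F : Type*} [Field F] [Fintype F] [DecidableEq F]
    (hcard : Fintype.card F = q) (hq : 3 < q)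
    (ω : F) (hω : ∀ x : F, x ≠ 0 → ∃ k : ℕ, ω ^ k = x) :
    IsGH 1 (mulTable F) ∧
    IsGH 1 (fun i j => i * (Equiv.swap (1 : F) ω j) : Matrix F F F) ∧
    ¬ TransEquiv (mulTable F) (fun i j => i * (Equiv.swap (1 : F) ω j) : Matrix F F F) ∧
    rowSet (mulTable F) ∩
      rowSet (fun i j => i * (Equiv.swap (1 : F) ω j) : Matrix F F F) = {0} := by
  obtain ⟨z, hz0, hz1, hzω⟩ := Fintype.exists_ne_ne_ne_of_three_lt_card (hcard ▸ hq) 0 1 ω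
  have hω1 : ω ≠ 1 := by
    rintro rfl
    obtain ⟨k, hk⟩ := hω z hz0
    exact hz1 (by simpa using hk.symm)
  have hinter := rowSet_mulTable_inter_rowSet_mul_perm (y := 1) hz0
    (Equiv.swap_apply_of_ne_of_ne hz1 hzω) (by rwa [Equiv.swap_apply_left])
  exact ⟨isGH_one_mulTable, isGH_one_mul_perm _, not_transEquiv_mulTable_mul_perm hinter, hinter⟩
end

section
/- For every q > 2, there exists a generalized Hadamard matrix H(q,q) over 𝔽_q such that the associated GH code C_H of length n = q² over 𝔽_q has ker(C_H) = 2. -/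
open Finset

/-!
Index rows and columns by `F × F` and take `h_{(a,b),(x,y)} = a x + b y + δ(a) δ(y)`, where
`δ` is the indicator function of `1`. The difference of two distinct rows is
`(a - a') x + (b - b') y + (δ a - δ a') δ(y)`: for `a ≠ a'` it is a bijective affine function
of `x` for each fixed `y`, and for `a = a'` a nonconstant linear function of `y`, so it takes
every value `q` times.

The codewords are `a x + b y + δ(a) δ(y) + α`. As `q > 2` there is `u ∉ {0, 1}`, and evaluating
at `(0,0)`, `(1,0)`, `(0,u)`, `(0,1)` shows that `a x + b y + k δ(y) + α` is a codeword only if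
`k = δ(a)`. So if a codeword with parameter `a` lies in the kernel, adding it to the codeword
with parameter `a'` forces `δ(a) + δ(a') = δ(a + a')` for all `a'`, hence `a = 0`. The kernel
is therefore `{b y + α}`, which has dimension 2.
-/

section Kernel

variable {F ι κ : Type*}

theorem add_mem_of_mem_kerSet [Semiring F] {C : Set (ι → F)} {x c : ι → F}
    (hx : x ∈ kerSet C) (hc : c ∈ C) : x + c ∈ C := by
  rw [← hx 1]
  exact ⟨c, hc, by simp⟩

theorem mem_kerSet_of_forall_smul_add_mem [Ring F] {C : Set (ι → F)} {x : ι → F}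
    (h : ∀ β : F, ∀ c ∈ C, β • x + c ∈ C) : x ∈ kerSet C := by
  intro β
  apply Set.Subset.antisymm
  · rintro _ ⟨c, hc, rfl⟩
    exact h β c hc
  · intro c hc
    refine ⟨(-β) • x + c, h (-β) c hc, ?_⟩
    show β • x + ((-β) • x + c) = c
    rw [← add_assoc, ← add_smul, add_neg_cancel, zero_smul, zero_add]

theorem kerSet_image_linearEquiv [Semiring F] (T : (ι → F) ≃ₗ[F] (κ → F))
    (C : Set (ι → F)) :
    kerSet (T '' C) = T '' kerSet C := by
  have hshift : ∀ (β : F) (y : ι → F),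
      (fun c => (fun i => β * T y i) + c) '' (T '' C) =
        T '' ((fun c => (fun i => β * y i) + c) '' C) := by
    intro β y
    simp only [Set.image_image]
    congr! with c
    exact (congrArg (· + T c) (T.map_smul β y).symm).trans (T.map_add _ _).symm
  ext x
  obtain ⟨y, rfl⟩ := T.surjective x
  rw [T.injective.mem_set_image]
  refine forall_congr' fun β => ?_
  rw [hshift]
  exact (Set.image_injective.2 T.injective).eq_iff

theorem kerDim_image_linearEquiv [Field F] (T : (ι → F) ≃ₗ[F] (κ → F))
    (C : Set (ι → F)) : kerDim (T '' C) = kerDim C := by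
  rw [kerDim, kerSet_image_linearEquiv, ← LinearEquiv.coe_toLinearMap, Submodule.span_image,
    LinearEquiv.finrank_map_eq, kerDim]

end Kernel

section Reindex

variable {F ι κ : Type*}

theorem ghCode_submatrix [Semiring F] (H : Matrix ι ι F) (e : κ ≃ ι) :
    ghCode (H.submatrix e e) = LinearEquiv.funCongrLeft F F e '' ghCode H := by
  ext v
  constructor
  · rintro ⟨α, i, rfl⟩
    exact ⟨fun r => H (e i) r + α, ⟨α, e i, rfl⟩, rfl⟩
  · rintro ⟨_, ⟨α, i, rfl⟩, rfl⟩
    exact ⟨α, e.symm i, by ext; simp⟩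

theorem IsGH.submatrix [Fintype F] [DecidableEq F] [Sub F] [Fintype ι] [Fintype κ] {lam : ℕ}
    {H : Matrix ι ι F} (hH : IsGH lam H) (e : κ ≃ ι) : IsGH lam (H.submatrix e e) :=
  fun i j hij a =>
    (Finset.card_equiv e fun _ => by
      simp only [Finset.mem_filter, Finset.mem_univ, true_and]; rfl).trans
      (hH (e i) (e j) (e.injective.ne hij) a)

theorem Normalized.submatrix [Zero F] {n : ℕ} {H : Matrix ι ι F} {i₀ : ι}
    (hrow : ∀ s, H i₀ s = 0) (hcol : ∀ r, H r i₀ = 0) (e : Fin n ≃ ι)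
    (he : ∀ i : Fin n, i.val = 0 → e i = i₀) : Normalized (H.submatrix e e) := by
  rintro i s (hi | hs)
  · exact (congrArg (H · (e s)) (he i hi)).trans (hrow _)
  · exact (congrArg (H (e i)) (he s hs)).trans (hcol _)

theorem exists_equiv_fin_zero_eq [Fintype ι] [DecidableEq ι] {n : ℕ} (hn : Fintype.card ι = n)
    (i₀ : ι) : ∃ e : Fin n ≃ ι, ∀ i : Fin n, i.val = 0 → e i = i₀ := by
  subst hn
  have : Nonempty ι := ⟨i₀⟩
  let e₀ := (Fintype.equivFin ι).symm
  refine ⟨e₀.trans (Equiv.swap (e₀ ⟨0, Fintype.card_pos⟩) i₀), fun i hi => ?_⟩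
  rw [show i = ⟨0, Fintype.card_pos⟩ from Fin.ext hi, Equiv.trans_apply, Equiv.swap_apply_left]

end Reindex

theorem exists_ne_ne_of_two_lt_card {α : Type*} [Fintype α] (h : 2 < Fintype.card α) (a b : α) :
    ∃ c, c ≠ a ∧ c ≠ b := by
  classical
  obtain ⟨c, -, hc⟩ := Finset.exists_mem_notMem_of_card_lt_card
    (Finset.card_le_two.trans_lt h : #{a, b} < #(Finset.univ : Finset α))
  simp only [Finset.mem_insert, Finset.mem_singleton, not_or] at hc
  exact ⟨c, hc⟩

section Counting

variable {F : Type*} [Field F] [Fintype F] [DecidableEq F]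

theorem card_filter_mul_fst_add_eq {u : F} (hu : u ≠ 0) (g : F → F) (v : F) :
    #{s : F × F | u * s.1 + g s.2 = v} = Fintype.card F := by
  rw [← Finset.card_univ]
  refine Finset.card_nbij' Prod.snd (fun y => (u⁻¹ * (v - g y), y)) (by simp) ?_ ?_
    fun _ _ => rfl
  · intro y _
    simp [mul_inv_cancel_left₀ hu]
  · intro s hs
    simp only [Finset.coe_filter, Finset.mem_univ, true_and, Set.mem_ofPred_eq] at hs
    ext
    · simp [← hs, hu]
    · rfl

theorem card_filter_add_mul_snd_eq {u : F} (hu : u ≠ 0) (g : F → F) (v : F) :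
    #{s : F × F | g s.1 + u * s.2 = v} = Fintype.card F := by
  rw [← card_filter_mul_fst_add_eq hu g v]
  exact Finset.card_equiv (Equiv.prodComm F F) fun s => by simp [add_comm]

end Counting

section SndAffine

variable {F : Type*} [CommRing F]

def sndAffine : (F × F) →ₗ[F] (F × F → F) where
  toFun p r := p.1 * r.2 + p.2
  map_add' _ _ := by ext; simp only [Prod.fst_add, Prod.snd_add, Pi.add_apply]; ring
  map_smul' _ _ := by ext; simp only [Prod.smul_fst, Prod.smul_snd, smul_eq_mul, Pi.smul_apply,
    RingHom.id_apply]; ring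

theorem sndAffine_injective : Function.Injective (sndAffine (F := F)) := by
  rw [← LinearMap.ker_eq_bot, LinearMap.ker_eq_bot']
  intro p hp
  have h0 := congrFun hp (0, 0)
  have h1 := congrFun hp (0, 1)
  simp only [sndAffine, LinearMap.coe_mk, AddHom.coe_mk, Pi.zero_apply, mul_zero, mul_one,
    zero_add] at h0 h1
  exact Prod.ext (by simpa [h0] using h1) h0

end SndAffine

section TwistedMulTable

variable {F : Type*} [Field F] [DecidableEq F]

def oneIndicator (t : F) : F := if t = 1 then 1 else 0

variable (F) in
def twistedMulTable : Matrix (F × F) (F × F) F :=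
  kroneckerSumFam (mulTable F) fun a b y => b * y + oneIndicator a * oneIndicator y

def twistedWord (a b k α : F) : F × F → F :=
  fun r => a * r.1 + b * r.2 + k * oneIndicator r.2 + α

@[simp] theorem oneIndicator_zero : oneIndicator (0 : F) = 0 := if_neg zero_ne_one

@[simp] theorem oneIndicator_one : oneIndicator (1 : F) = 1 := if_pos rfl

theorem oneIndicator_of_ne {t : F} (ht : t ≠ 1) : oneIndicator t = 0 := if_neg ht

theorem twistedMulTable_apply (p r : F × F) :
    twistedMulTable F p r = p.1 * r.1 + p.2 * r.2 + oneIndicator p.1 * oneIndicator r.2 :=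
  (add_assoc _ _ _).symm

theorem mem_ghCode_twistedMulTable {v : F × F → F} :
    v ∈ ghCode (twistedMulTable F) ↔
      ∃ a b α : F, v = twistedWord a b (oneIndicator a) α := by
  simp only [ghCode, Set.mem_ofPred_eq, twistedMulTable_apply, Prod.exists]
  constructor
  · rintro ⟨α, a, b, rfl⟩
    exact ⟨a, b, α, rfl⟩
  · rintro ⟨a, b, α, rfl⟩
    exact ⟨α, a, b, rfl⟩

theorem twistedWord_add (a b k α a' b' k' α' : F) :
    twistedWord a b k α + twistedWord a' b' k' α' =
      twistedWord (a + a') (b + b') (k + k') (α + α') := by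
  ext; simp only [twistedWord, Pi.add_apply]; ring

theorem twistedWord_mem_ghCode_iff {u : F} (hu0 : u ≠ 0) (hu1 : u ≠ 1) {a b k α : F} :
    twistedWord a b k α ∈ ghCode (twistedMulTable F) ↔ k = oneIndicator a := by
  refine ⟨fun h => ?_, fun h => mem_ghCode_twistedMulTable.2 ⟨a, b, α, h ▸ rfl⟩⟩
  obtain ⟨a', b', α', heq⟩ := mem_ghCode_twistedMulTable.1 h
  have e00 := congrFun heq (0, 0)
  have e10 := congrFun heq (1, 0)
  have e0u := congrFun heq (0, u)
  have e01 := congrFun heq (0, 1)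
  simp only [twistedWord, oneIndicator_zero, oneIndicator_one, oneIndicator_of_ne hu1, mul_zero,
    mul_one, add_zero, zero_add] at e00 e10 e0u e01
  have ha : a = a' := by linear_combination e10 - e00
  have hb : b = b' := mul_right_cancel₀ hu0 (by linear_combination e0u - e00)
  rw [ha]
  linear_combination e01 - e00 - hb

theorem exists_oneIndicator_add_ne {u : F} (hu0 : u ≠ 0) (hu1 : u ≠ 1) {a : F} (ha : a ≠ 0) :
    ∃ a', oneIndicator a + oneIndicator a' ≠ oneIndicator (a + a') := by
  by_cases ha1 : a = 1
  · refine ⟨u, ?_⟩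
    rw [ha1, oneIndicator_one, oneIndicator_of_ne hu1, oneIndicator_of_ne (by simpa using hu0)]
    simp
  · refine ⟨1, ?_⟩
    rw [oneIndicator_of_ne ha1, oneIndicator_one, oneIndicator_of_ne (by simpa using ha)]
    simp

theorem kerSet_ghCode_twistedMulTable {u : F} (hu0 : u ≠ 0) (hu1 : u ≠ 1) :
    kerSet (ghCode (twistedMulTable F)) = Set.range (sndAffine (F := F)) := by
  ext x
  constructor
  · intro hx
    have hzero : (0 : F × F → F) ∈ ghCode (twistedMulTable F) :=
      mem_ghCode_twistedMulTable.2 ⟨0, 0, 0, by ext; simp [twistedWord]⟩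
    obtain ⟨a, b, α, rfl⟩ :=
      mem_ghCode_twistedMulTable.1 (add_zero x ▸ add_mem_of_mem_kerSet hx hzero)
    obtain rfl : a = 0 := by
      by_contra ha
      obtain ⟨a', ha'⟩ := exists_oneIndicator_add_ne hu0 hu1 ha
      have hsum := add_mem_of_mem_kerSet hx (mem_ghCode_twistedMulTable.2 ⟨a', 0, 0, rfl⟩)
      rw [twistedWord_add, twistedWord_mem_ghCode_iff hu0 hu1] at hsum
      exact ha' hsum
    exact ⟨(b, α), by ext; simp [sndAffine, twistedWord]⟩
  · rintro ⟨⟨b, α⟩, rfl⟩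
    refine mem_kerSet_of_forall_smul_add_mem fun β c hc => ?_
    obtain ⟨a, b', α', rfl⟩ := mem_ghCode_twistedMulTable.1 hc
    refine mem_ghCode_twistedMulTable.2 ⟨a, β * b + b', β * α + α', ?_⟩
    ext
    simp only [sndAffine, twistedWord, LinearMap.coe_mk, AddHom.coe_mk, Pi.add_apply,
      Pi.smul_apply, smul_eq_mul]
    ring

theorem kerDim_ghCode_twistedMulTable {u : F} (hu0 : u ≠ 0) (hu1 : u ≠ 1) :
    kerDim (ghCode (twistedMulTable F)) = 2 := by
  rw [kerDim, kerSet_ghCode_twistedMulTable hu0 hu1, ← LinearMap.coe_range, Submodule.span_eq,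
    LinearMap.finrank_range_of_inj sndAffine_injective, Module.finrank_prod, Module.finrank_self]

theorem isGH_twistedMulTable [Fintype F] : IsGH (Fintype.card F) (twistedMulTable F) := by
  rintro ⟨a, b⟩ ⟨a', b'⟩ hne v
  have hdiff : ∀ s : F × F, twistedMulTable F (a, b) s - twistedMulTable F (a', b') s =
      (a - a') * s.1 +
        ((b - b') * s.2 + (oneIndicator a - oneIndicator a') * oneIndicator s.2) := by
    intro s
    rw [twistedMulTable_apply, twistedMulTable_apply]
    ring
  simp_rw [hdiff]
  by_cases ha : a = a'
  · subst ha
    have hb : b - b' ≠ 0 := sub_ne_zero.2 fun hb => hne (hb ▸ rfl)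
    simpa using card_filter_add_mul_snd_eq hb (fun _ => 0) v
  · exact card_filter_mul_fst_add_eq (sub_ne_zero.2 ha)
      (fun y => (b - b') * y + (oneIndicator a - oneIndicator a') * oneIndicator y) v

end TwistedMulTable

theorem stmt8 {q : ℕ} {F : Type*} [Field F] [Fintype F] [DecidableEq F]
    (hcard : Fintype.card F = q) (hq : 2 < q) :
    ∃ H : Matrix (Fin (q * q)) (Fin (q * q)) F,
      IsGH q H ∧ Normalized H ∧ kerDim (ghCode H) = 2 := by
  subst hcard
  obtain ⟨u, hu0, hu1⟩ := exists_ne_ne_of_two_lt_card hq 0 1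
  obtain ⟨e, he⟩ := exists_equiv_fin_zero_eq (Fintype.card_prod F F) (0, 0)
  refine ⟨(twistedMulTable F).submatrix e e, isGH_twistedMulTable.submatrix e,
    Normalized.submatrix (fun _ => by simp [twistedMulTable_apply])
      (fun _ => by simp [twistedMulTable_apply]) e he, ?_⟩
  rw [ghCode_submatrix, kerDim_image_linearEquiv, kerDim_ghCode_twistedMulTable hu0 hu1]
end

section
/- Let H(q,λ) be a normalized generalized Hadamard matrix over 𝔽_q, with q > 2, or with q = 2 and λ even. Then rank(C_H) ≤ n − 1, where n = qλ. -/
open Finset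

/-!
Every codeword of `C_H` has coordinate sum zero, so `C_H` spans a subspace of the hyperplane
`∑ s, v s = 0`. For a row `i ≠ 0` of `H`, the entries `H i s = H i s - H 0 s` take each value of
`F` exactly `λ` times, so the row sums to `λ • ∑ a : F, a`; this vanishes because `∑ a : F, a = 0`
when `q > 2`, while for `q = 2` the characteristic is `2` and `λ` is even. Adding `α • 𝟏` changes
the sum by `n • α = 0`, since `q ∣ n`.
-/

section FiniteField

variable {F : Type*} [Field F] [Fintype F]

theorem FiniteField.natCast_eq_zero_of_card_dvd {m : ℕ} (h : Fintype.card F ∣ m) :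
    (m : F) = 0 := by
  obtain ⟨k, rfl⟩ := h
  rw [Nat.cast_mul, FiniteField.cast_card_eq_zero, zero_mul]

theorem FiniteField.nsmul_sum_univ_eq_zero {lam : ℕ}
    (h : 2 < Fintype.card F ∨ (Fintype.card F = 2 ∧ Even lam)) :
    lam • ∑ x : F, x = 0 := by
  rcases h with h | ⟨h2, hlam⟩
  · simpa using congrArg (lam • ·) (FiniteField.sum_pow_lt_card_sub_one F 1 (by omega))
  · rw [nsmul_eq_mul, FiniteField.natCast_eq_zero_of_card_dvd (h2 ▸ hlam.two_dvd), zero_mul]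

end FiniteField

theorem Finset.sum_eq_nsmul_sum_univ_of_card_fiber {ι F : Type*} [Fintype ι] [AddCommMonoid F]
    [Fintype F] [DecidableEq F] {lam : ℕ} (f : ι → F) (h : ∀ a, #{s | f s = a} = lam) :
    ∑ s, f s = lam • ∑ a : F, a := by
  rw [← Finset.sum_fiberwise univ f f, Finset.smul_sum]
  refine Finset.sum_congr rfl fun a _ => ?_
  rw [Finset.sum_congr rfl fun s hs => (Finset.mem_filter.mp hs).2, Finset.sum_const, h]

theorem Module.finrank_span_le_card_sub_one_of_sum_eq_zero {K ι : Type*} [Field K] [Fintype ι]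
    {C : Set (ι → K)} (hC : ∀ v ∈ C, ∑ s, v s = 0) :
    Module.finrank K (Submodule.span K C) ≤ Fintype.card ι - 1 := by
  cases isEmpty_or_nonempty ι with
  | inl _ => simp [Submodule.eq_bot_of_subsingleton]
  | inr hne =>
    classical
    obtain ⟨s₀⟩ := hne
    let φ : (ι → K) →ₗ[K] K := ∑ s, LinearMap.proj s
    have hφ (v : ι → K) : φ v = ∑ s, v s := by simp [φ]
    have hspan : Submodule.span K C ≤ LinearMap.ker φ :=
      Submodule.span_le.mpr fun v hv => by simpa [hφ] using hC v hv
    have hker : LinearMap.ker φ ≠ ⊤ := fun h => by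
      simpa [hφ] using LinearMap.congr_fun (LinearMap.ker_eq_top.mp h) (Pi.single s₀ 1)
    have := (Submodule.finrank_mono hspan).trans_lt (Submodule.finrank_lt hker)
    rw [Module.finrank_fintype_fun_eq_card] at this
    omega

section GH

variable {F : Type*} [AddCommGroup F] [Fintype F] [DecidableEq F] {lam : ℕ}

theorem IsGH.sum_row_eq_nsmul_sum_univ {ι : Type*} [Fintype ι] {H : Matrix ι ι F}
    (hGH : IsGH lam H) {i j : ι} (hij : i ≠ j) (hj : H j = 0) :
    ∑ s, H i s = lam • ∑ a : F, a :=
  Finset.sum_eq_nsmul_sum_univ_of_card_fiber _ fun a => by simpa [hj] using hGH i j hij a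

theorem IsGH.sum_row_eq_zero {n : ℕ} {H : Matrix (Fin n) (Fin n) F} (hGH : IsGH lam H)
    (hnorm : Normalized H) (hsum : lam • ∑ x : F, x = 0) (i : Fin n) : ∑ s, H i s = 0 := by
  have hrow0 (j : Fin n) (hj : j.val = 0) : H j = 0 := funext fun s => hnorm j s (Or.inl hj)
  by_cases hi : i.val = 0
  · simp [hrow0 i hi]
  · rw [hGH.sum_row_eq_nsmul_sum_univ (j := ⟨0, i.pos⟩) (Fin.ne_of_val_ne hi) (hrow0 _ rfl), hsum]

end GH

theorem sum_eq_zero_of_mem_ghCode {F ι : Type*} [Semiring F] [Fintype ι] {H : Matrix ι ι F}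
    (hrow : ∀ i, ∑ s, H i s = 0) (hι : (Fintype.card ι : F) = 0) {v : ι → F}
    (hv : v ∈ ghCode H) : ∑ s, v s = 0 := by
  obtain ⟨α, i, rfl⟩ := hv
  simp [Finset.sum_add_distrib, hrow i, hι]

theorem stmt14_general {q lam : ℕ} {F : Type*} [Field F] [Fintype F] [DecidableEq F]
    (hcard : Fintype.card F = q)
    (hq : 2 < q ∨ (q = 2 ∧ Even lam))
    (H : Matrix (Fin (q * lam)) (Fin (q * lam)) F)
    (hGH : IsGH lam H) (hnorm : Normalized H) :
    rankC (ghCode H) ≤ q * lam - 1 := by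
  subst hcard
  have hrow := hGH.sum_row_eq_zero hnorm (FiniteField.nsmul_sum_univ_eq_zero hq)
  have hn : ((Fintype.card (Fin (Fintype.card F * lam)) : ℕ) : F) = 0 :=
    FiniteField.natCast_eq_zero_of_card_dvd (by simp)
  simpa [rankC] using Module.finrank_span_le_card_sub_one_of_sum_eq_zero
    fun v hv => sum_eq_zero_of_mem_ghCode hrow hn hv

theorem stmt14 {q lam : ℕ} {F : Type*} [Field F] [Fintype F] [DecidableEq F]
    (hcard : Fintype.card F = q) (hlam : 0 < lam)
    (hq : 2 < q ∨ (q = 2 ∧ Even lam))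
    (H : Matrix (Fin (q * lam)) (Fin (q * lam)) F)
    (hGH : IsGH lam H) (hnorm : Normalized H) :
    rankC (ghCode H) ≤ q * lam - 1 :=
  stmt14_general hcard hq H hGH hnorm
end
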